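/- arXiv:1810.10280 — 2 statements merged into one kernel-verified Lean document; each statement's English description precedes it below -/
import Mathlib

section
/- Fix an integer m ≥ 1. The space C_∞^G(Δ_G^m) is complete with respect to the geometric norm: if (x^r)_{r≥1} is a sequence of elements of C_∞^G(Δ_G^m) that is Cauchy, i.e. for every ε > 0 there is N such that N_∞(x^r ⊖ x^t) < ε for all r, t ≥ N, where x ⊖ z denotes the pointwise quotient sequence (x_k / z_k) and N_∞(x) = ∑_{i=1}^m |log x_i| + sup_n |(1/n) ∑_{k=1}^n Δ^m (log x)_k|, then there exists x ∈ C_∞^G(Δ_G^m) such that N_∞(x^r ⊖ x) → 0 as r → ∞. -/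
/-- Classical `m`-th order forward difference
`Δ^m y_k = ∑_{v=0}^m (−1)^v C(m,v) y_{k+v}`. -/
noncomputable def fdiff (m : ℕ) (y : ℕ → ℝ) (k : ℕ) : ℝ :=
  ∑ v ∈ Finset.range (m + 1), (-1 : ℝ) ^ v * (m.choose v : ℝ) * y (k + v)

/-- The Cesàro mean `(1/n) ∑_{k=1}^n Δ^m (log x)_k`. -/
noncomputable def cesaro (m : ℕ) (x : ℕ → ℝ) (n : ℕ) : ℝ :=
  (1 / (n : ℝ)) * ∑ k ∈ Finset.Icc 1 n, fdiff m (fun j => Real.log (x j)) k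

/-- Membership in the bigeometric Cesàro difference space `C_p^G(Δ_G^m)`. -/
def memCpG (m : ℕ) (p : ℝ) (x : ℕ → ℝ) : Prop :=
  (∀ k, 1 ≤ k → 0 < x k) ∧ Summable (fun n : ℕ => |cesaro m x n| ^ p)

/-- Membership in the bigeometric Cesàro difference space `C_∞^G(Δ_G^m)`. -/
def memCinfG (m : ℕ) (x : ℕ → ℝ) : Prop :=
  (∀ k, 1 ≤ k → 0 < x k) ∧ ∃ C : ℝ, ∀ n : ℕ, |cesaro m x n| ≤ C

/-- `N_∞(x) = log ‖x‖_∞^G`, the logarithm of the geometric norm on `C_∞^G(Δ_G^m)`. -/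
noncomputable def NinfG (m : ℕ) (x : ℕ → ℝ) : ℝ :=
  (∑ i ∈ Finset.Icc 1 m, |Real.log (x i)|) + ⨆ n : ℕ, |cesaro m x n|

open Finset Filter

/-- Cesàro mean of a raw (already-logged) sequence. -/
noncomputable def CZ (m : ℕ) (z : ℕ → ℝ) (n : ℕ) : ℝ :=
  (1 / (n : ℝ)) * ∑ k ∈ Finset.Icc 1 n, fdiff m z k

lemma cesaro_eq_CZ (m : ℕ) (x : ℕ → ℝ) (n : ℕ) :
    cesaro m x n = CZ m (fun j => Real.log (x j)) n := rfl

lemma fdiff_congr {m : ℕ} {z w : ℕ → ℝ} (h : ∀ j, 1 ≤ j → z j = w j) {k : ℕ} (hk : 1 ≤ k) :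
    fdiff m z k = fdiff m w k := by
  unfold fdiff
  refine Finset.sum_congr rfl fun v _ => ?_
  rw [h (k + v) (le_trans hk (Nat.le_add_right _ _))]

lemma CZ_congr {m : ℕ} {z w : ℕ → ℝ} (h : ∀ j, 1 ≤ j → z j = w j) (n : ℕ) :
    CZ m z n = CZ m w n := by
  unfold CZ
  congr 1
  exact Finset.sum_congr rfl fun k hk => fdiff_congr h (Finset.mem_Icc.mp hk).1

lemma fdiff_sub (m : ℕ) (z w : ℕ → ℝ) (k : ℕ) :
    fdiff m (fun j => z j - w j) k = fdiff m z k - fdiff m w k := by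
  simp [fdiff, mul_sub, Finset.sum_sub_distrib]

lemma CZ_sub (m : ℕ) (z w : ℕ → ℝ) (n : ℕ) :
    CZ m (fun j => z j - w j) n = CZ m z n - CZ m w n := by
  simp [CZ, fdiff_sub, Finset.sum_sub_distrib, mul_sub]

lemma cesaro_div (m : ℕ) (x y : ℕ → ℝ) (hx : ∀ k, 1 ≤ k → 0 < x k)
    (hy : ∀ k, 1 ≤ k → 0 < y k) (n : ℕ) :
    cesaro m (fun k => x k / y k) n = cesaro m x n - cesaro m y n := by
  rw [cesaro_eq_CZ, cesaro_eq_CZ, cesaro_eq_CZ, ← CZ_sub]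
  exact CZ_congr (fun j hj => Real.log_div (hx j hj).ne' (hy j hj).ne') n

lemma sum_fdiff (m : ℕ) (z : ℕ → ℝ) (n : ℕ) :
    ∑ k ∈ Finset.Icc 1 n, fdiff m z k = (n : ℝ) * CZ m z n := by
  rcases Nat.eq_zero_or_pos n with h | h
  · simp [h]
  · have hn : (n : ℝ) ≠ 0 := Nat.cast_ne_zero.mpr h.ne'
    rw [CZ]
    field_simp

lemma fdiff_eq (m : ℕ) (z : ℕ → ℝ) (i : ℕ) :
    fdiff m z (i + 1) = ((i : ℝ) + 1) * CZ m z (i + 1) - (i : ℝ) * CZ m z i := by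
  have h1 := sum_fdiff m z (i + 1)
  have h2 := sum_fdiff m z i
  have h3 : ∑ k ∈ Finset.Icc 1 (i + 1), fdiff m z k
      = (∑ k ∈ Finset.Icc 1 i, fdiff m z k) + fdiff m z (i + 1) :=
    Finset.sum_Icc_succ_top (Nat.le_add_left 1 i) _
  push_cast at h1
  linarith [h1, h2, h3]

/-- Recovery lemma: each term of `z` is controlled by the first `m` terms and
the Cesàro means of the `m`-th differences. -/
lemma recover (m : ℕ) (hm : 1 ≤ m) :
    ∀ k : ℕ, 1 ≤ k → ∃ c : ℝ, 0 ≤ c ∧ ∀ (z : ℕ → ℝ) (B : ℝ), 0 ≤ B →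
      (∀ i, 1 ≤ i → i ≤ m → |z i| ≤ B) → (∀ n, |CZ m z n| ≤ B) → |z k| ≤ c * B := by
  intro k
  induction k using Nat.strong_induction_on with
  | _ k IH =>
    intro hk
    by_cases hkm : k ≤ m
    · exact ⟨1, zero_le_one, fun z B hB h1 _ => by simpa using h1 k hk hkm⟩
    · push_neg at hkm
      obtain ⟨j, hj1, hjm⟩ : ∃ j, 1 ≤ j ∧ j + m = k := ⟨k - m, by omega, by omega⟩
      have H : ∀ v : ℕ, ∃ c : ℝ, 0 ≤ c ∧ (v < m → ∀ (z : ℕ → ℝ) (B : ℝ), 0 ≤ B →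
          (∀ i, 1 ≤ i → i ≤ m → |z i| ≤ B) → (∀ n, |CZ m z n| ≤ B) → |z (j + v)| ≤ c * B) := by
        intro v
        by_cases hv : v < m
        · obtain ⟨c, hc0, hc⟩ := IH (j + v) (by omega) (by omega)
          exact ⟨c, hc0, fun _ => hc⟩
        · exact ⟨0, le_refl 0, fun h => absurd h hv⟩
      choose c hc0 hc using H
      refine ⟨2 * (j : ℝ) + ∑ v ∈ Finset.range m, (m.choose v : ℝ) * c v, ?_, ?_⟩
      · have h1 : 0 ≤ ∑ v ∈ Finset.range m, (m.choose v : ℝ) * c v :=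
          Finset.sum_nonneg fun v _ => mul_nonneg (Nat.cast_nonneg _) (hc0 v)
        have h2 : (0 : ℝ) ≤ 2 * (j : ℝ) := by positivity
        linarith
      · intro z B hB h1 h2
        have hsplit : fdiff m z j
            = (∑ v ∈ Finset.range m, (-1 : ℝ) ^ v * (m.choose v : ℝ) * z (j + v))
              + (-1 : ℝ) ^ m * z k := by
          rw [fdiff, Finset.sum_range_succ, Nat.choose_self, hjm]
          push_cast
          ring
        have hzk : |z k| ≤ |fdiff m z j| + ∑ v ∈ Finset.range m, (m.choose v : ℝ) * |z (j + v)| := by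
          have heq : (-1 : ℝ) ^ m * z k
              = fdiff m z j - ∑ v ∈ Finset.range m, (-1 : ℝ) ^ v * (m.choose v : ℝ) * z (j + v) := by
            rw [hsplit]; ring
          have habs : |z k| = |fdiff m z j - ∑ v ∈ Finset.range m, (-1 : ℝ) ^ v * (m.choose v : ℝ) * z (j + v)| := by
            rw [← heq, abs_mul, abs_pow, abs_neg, abs_one, one_pow, one_mul]
          rw [habs]
          refine (abs_sub _ _).trans (add_le_add le_rfl ?_)
          refine (Finset.abs_sum_le_sum_abs _ _).trans ?_
          refine Finset.sum_le_sum fun v _ => ?_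
          rw [abs_mul, abs_mul, abs_pow, abs_neg, abs_one, one_pow, one_mul,
            Nat.abs_cast]
        have hfd : |fdiff m z j| ≤ 2 * (j : ℝ) * B := by
          obtain ⟨i, rfl⟩ : ∃ i, j = i + 1 := ⟨j - 1, by omega⟩
          rw [fdiff_eq]
          have t1 : |((i : ℝ) + 1) * CZ m z (i + 1)| ≤ ((i : ℝ) + 1) * B := by
            rw [abs_mul, abs_of_nonneg (by positivity : (0:ℝ) ≤ (i:ℝ)+1)]
            exact mul_le_mul_of_nonneg_left (h2 _) (by positivity)
          have t2 : |(i : ℝ) * CZ m z i| ≤ (i : ℝ) * B := by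
            rw [abs_mul, abs_of_nonneg (by positivity : (0:ℝ) ≤ (i:ℝ))]
            exact mul_le_mul_of_nonneg_left (h2 _) (by positivity)
          have := abs_sub (((i : ℝ) + 1) * CZ m z (i + 1)) ((i : ℝ) * CZ m z i)
          push_cast
          nlinarith [hB, Nat.cast_nonneg (α := ℝ) i]
        have hsum : ∑ v ∈ Finset.range m, (m.choose v : ℝ) * |z (j + v)|
            ≤ (∑ v ∈ Finset.range m, (m.choose v : ℝ) * c v) * B := by
          rw [Finset.sum_mul]
          refine Finset.sum_le_sum fun v hv => ?_
          rw [mul_assoc]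
          exact mul_le_mul_of_nonneg_left
            (hc v (Finset.mem_range.mp hv) z B hB h1 h2) (Nat.cast_nonneg _)
        calc |z k| ≤ |fdiff m z j| + ∑ v ∈ Finset.range m, (m.choose v : ℝ) * |z (j + v)| := hzk
          _ ≤ 2 * (j : ℝ) * B + (∑ v ∈ Finset.range m, (m.choose v : ℝ) * c v) * B :=
              add_le_add hfd hsum
          _ = (2 * (j : ℝ) + ∑ v ∈ Finset.range m, (m.choose v : ℝ) * c v) * B := by ring

/-- `C_∞^G(Δ_G^m)` is complete with respect to its geometric norm. -/
theorem CinfG_complete (m : ℕ) (hm : 1 ≤ m)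
    (X : ℕ → ℕ → ℝ) (hX : ∀ r, memCinfG m (X r))
    (hCauchy : ∀ ε : ℝ, 0 < ε → ∃ N : ℕ, ∀ r t : ℕ, N ≤ r → N ≤ t →
      NinfG m (fun k => X r k / X t k) < ε) :
    ∃ x : ℕ → ℝ, memCinfG m x ∧
      Filter.Tendsto (fun r => NinfG m (fun k => X r k / x k))
        Filter.atTop (nhds 0) := by
  classical
  have hpos : ∀ r k, 1 ≤ k → 0 < X r k := fun r => (hX r).1
  have hq : ∀ r t n, cesaro m (fun k => X r k / X t k) n
      = cesaro m (X r) n - cesaro m (X t) n :=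
    fun r t n => cesaro_div m _ _ (hpos r) (hpos t) n
  -- lower bounds on the Cauchy quantity
  have key : ∀ r t : ℕ,
      (∀ i, 1 ≤ i → i ≤ m →
        |Real.log (X r i) - Real.log (X t i)| ≤ NinfG m (fun k => X r k / X t k)) ∧
      (∀ n, |cesaro m (X r) n - cesaro m (X t) n| ≤ NinfG m (fun k => X r k / X t k)) := by
    intro r t
    have hsupbdd : BddAbove (Set.range fun n => |cesaro m (fun k => X r k / X t k) n|) := by
      obtain ⟨Cr, hCr⟩ := (hX r).2
      obtain ⟨Ct, hCt⟩ := (hX t).2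
      refine ⟨Cr + Ct, ?_⟩
      rintro _ ⟨n, rfl⟩
      show |cesaro m (fun k => X r k / X t k) n| ≤ Cr + Ct
      rw [hq]
      exact (abs_sub _ _).trans (add_le_add (hCr n) (hCt n))
    have hsum_nonneg : 0 ≤ ∑ i ∈ Finset.Icc 1 m, |Real.log (X r i / X t i)| :=
      Finset.sum_nonneg fun _ _ => abs_nonneg _
    have hsup_nonneg : 0 ≤ ⨆ n, |cesaro m (fun k => X r k / X t k) n| :=
      Real.iSup_nonneg fun n => abs_nonneg _
    constructor
    · intro i h1 h2
      have hlog : Real.log (X r i / X t i) = Real.log (X r i) - Real.log (X t i) :=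
        Real.log_div (hpos r i h1).ne' (hpos t i h1).ne'
      calc |Real.log (X r i) - Real.log (X t i)|
          = |Real.log (X r i / X t i)| := by rw [hlog]
        _ ≤ ∑ i ∈ Finset.Icc 1 m, |Real.log (X r i / X t i)| :=
            Finset.single_le_sum (f := fun i => |Real.log (X r i / X t i)|)
              (fun _ _ => abs_nonneg _) (Finset.mem_Icc.mpr ⟨h1, h2⟩)
        _ ≤ NinfG m (fun k => X r k / X t k) := le_add_of_nonneg_right hsup_nonneg
    · intro n
      calc |cesaro m (X r) n - cesaro m (X t) n|
          = |cesaro m (fun k => X r k / X t k) n| := by rw [hq]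
        _ ≤ ⨆ n, |cesaro m (fun k => X r k / X t k) n| := le_ciSup hsupbdd n
        _ ≤ NinfG m (fun k => X r k / X t k) := le_add_of_nonneg_left hsum_nonneg
  -- pointwise convergence of logs
  have hconv : ∀ k : ℕ, ∃ l : ℝ, 1 ≤ k →
      Tendsto (fun r => Real.log (X r k)) atTop (nhds l) := by
    intro k
    by_cases hk : 1 ≤ k
    · obtain ⟨c, hc0, hc⟩ := recover m hm k hk
      have hcau : CauchySeq (fun r => Real.log (X r k)) := by
        rw [Metric.cauchySeq_iff]
        intro ε hε
        obtain ⟨N, hN⟩ := hCauchy (ε / (c + 1)) (by positivity)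
        refine ⟨N, fun r hr t ht => ?_⟩
        rw [Real.dist_eq]
        set B := NinfG m (fun k => X r k / X t k) with hB
        have hB0 : 0 ≤ B := (abs_nonneg _).trans ((key r t).2 0)
        have h1 : ∀ i, 1 ≤ i → i ≤ m →
            |(fun j => Real.log (X r j) - Real.log (X t j)) i| ≤ B :=
          fun i a b => (key r t).1 i a b
        have h2 : ∀ n, |CZ m (fun j => Real.log (X r j) - Real.log (X t j)) n| ≤ B := by
          intro n
          rw [CZ_sub, ← cesaro_eq_CZ, ← cesaro_eq_CZ]
          exact (key r t).2 n
        have hb := hc (fun j => Real.log (X r j) - Real.log (X t j)) B hB0 h1 h2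
        have hlt : c * B ≤ c * (ε / (c + 1)) :=
          mul_le_mul_of_nonneg_left (le_of_lt (hN r t hr ht)) hc0
        have hfin : c * (ε / (c + 1)) < ε := by
          have h : c * (ε / (c + 1)) < (c + 1) * (ε / (c + 1)) :=
            mul_lt_mul_of_pos_right (by linarith) (by positivity)
          have he : (c + 1) * (ε / (c + 1)) = ε := by field_simp
          linarith
        calc |Real.log (X r k) - Real.log (X t k)| ≤ c * B := hb
          _ ≤ c * (ε / (c + 1)) := hlt
          _ < ε := hfin
      obtain ⟨l, hl⟩ := cauchySeq_tendsto_of_complete hcau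
      exact ⟨l, fun _ => hl⟩
    · exact ⟨0, fun h => absurd h hk⟩
  choose L hL using hconv
  set x : ℕ → ℝ := fun k => Real.exp (L k) with hxdef
  have hxpos : ∀ k, 1 ≤ k → 0 < x k := fun k _ => Real.exp_pos _
  have hxlog : ∀ j, Real.log (x j) = L j := fun j => Real.log_exp _
  have hcesx : ∀ n, cesaro m x n = CZ m L n := by
    intro n
    rw [cesaro_eq_CZ]
    exact CZ_congr (fun j _ => hxlog j) n
  have hten : ∀ n, Tendsto (fun r => cesaro m (X r) n) atTop (nhds (cesaro m x n)) := by
    intro n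
    rw [hcesx n]
    simp only [cesaro, CZ, fdiff]
    apply Tendsto.const_mul
    apply tendsto_finset_sum
    intro k hk
    apply tendsto_finset_sum
    intro v _
    apply Tendsto.const_mul
    exact hL (k + v) (le_trans (Finset.mem_Icc.mp hk).1 (Nat.le_add_right _ _))
  -- limit estimates
  have est : ∀ ε : ℝ, 0 < ε → ∃ N : ℕ, ∀ r, N ≤ r →
      (∀ i, 1 ≤ i → i ≤ m → |Real.log (X r i) - L i| ≤ ε) ∧
      (∀ n, |cesaro m (X r) n - cesaro m x n| ≤ ε) := by
    intro ε hε
    obtain ⟨N, hN⟩ := hCauchy ε hε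
    refine ⟨N, fun r hr => ⟨?_, ?_⟩⟩
    · intro i h1 h2
      have h3 : Tendsto (fun t => |Real.log (X r i) - Real.log (X t i)|) atTop
          (nhds |Real.log (X r i) - L i|) :=
        (tendsto_const_nhds.sub (hL i h1)).abs
      refine le_of_tendsto h3 ?_
      filter_upwards [eventually_ge_atTop N] with t ht
      exact le_of_lt (lt_of_le_of_lt ((key r t).1 i h1 h2) (hN r t hr ht))
    · intro n
      have h3 : Tendsto (fun t => |cesaro m (X r) n - cesaro m (X t) n|) atTop
          (nhds |cesaro m (X r) n - cesaro m x n|) :=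
        (tendsto_const_nhds.sub (hten n)).abs
      refine le_of_tendsto h3 ?_
      filter_upwards [eventually_ge_atTop N] with t ht
      exact le_of_lt (lt_of_le_of_lt ((key r t).2 n) (hN r t hr ht))
  -- x is in the space
  have hmem : memCinfG m x := by
    refine ⟨hxpos, ?_⟩
    obtain ⟨N, hN⟩ := est 1 one_pos
    obtain ⟨C, hC⟩ := (hX N).2
    refine ⟨C + 1, fun n => ?_⟩
    have h1 := (hN N le_rfl).2 n
    have h2 : |cesaro m x n| - |cesaro m (X N) n| ≤ |cesaro m x n - cesaro m (X N) n| :=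
      abs_sub_abs_le_abs_sub _ _
    rw [abs_sub_comm] at h2
    have := hC n
    linarith
  refine ⟨x, hmem, ?_⟩
  rw [Metric.tendsto_atTop]
  intro ε hε
  obtain ⟨N, hN⟩ := est (ε / (2 * ((m : ℝ) + 1))) (by positivity)
  refine ⟨N, fun r hr => ?_⟩
  rw [Real.dist_eq, sub_zero]
  have hq' : ∀ n, cesaro m (fun k => X r k / x k) n = cesaro m (X r) n - cesaro m x n :=
    cesaro_div m _ _ (hpos r) hxpos
  have hlogq : ∀ i, 1 ≤ i → Real.log (X r i / x i) = Real.log (X r i) - L i := by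
    intro i hi
    rw [Real.log_div (hpos r i hi).ne' (hxpos i hi).ne', hxlog]
  set ε' : ℝ := ε / (2 * ((m : ℝ) + 1)) with hε'def
  have hε'pos : 0 < ε' := by positivity
  have hsumle : ∑ i ∈ Finset.Icc 1 m, |Real.log (X r i / x i)| ≤ (m : ℝ) * ε' := by
    calc ∑ i ∈ Finset.Icc 1 m, |Real.log (X r i / x i)|
        ≤ ∑ _i ∈ Finset.Icc 1 m, ε' := by
          refine Finset.sum_le_sum fun i hi => ?_
          obtain ⟨hi1, hi2⟩ := Finset.mem_Icc.mp hi
          rw [hlogq i hi1]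
          exact (hN r hr).1 i hi1 hi2
      _ = (m : ℝ) * ε' := by
          rw [Finset.sum_const, Nat.card_Icc]
          simp [nsmul_eq_mul]
  have hsuple : (⨆ n, |cesaro m (fun k => X r k / x k) n|) ≤ ε' := by
    refine ciSup_le fun n => ?_
    rw [hq']
    exact (hN r hr).2 n
  have hnonneg : 0 ≤ NinfG m (fun k => X r k / x k) := by
    unfold NinfG
    have h1 : (0:ℝ) ≤ ∑ i ∈ Finset.Icc 1 m, |Real.log (X r i / x i)| :=
      Finset.sum_nonneg fun _ _ => abs_nonneg _
    have h2 : (0:ℝ) ≤ ⨆ n, |cesaro m (fun k => X r k / x k) n| :=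
      Real.iSup_nonneg fun n => abs_nonneg _
    linarith
  rw [abs_of_nonneg hnonneg]
  have hbound : NinfG m (fun k => X r k / x k) ≤ ((m : ℝ) + 1) * ε' := by
    unfold NinfG
    have := add_le_add hsumle hsuple
    linarith
  have hfin : ((m : ℝ) + 1) * ε' = ε / 2 := by
    rw [hε'def]
    field_simp
  have : NinfG m (fun k => X r k / x k) ≤ ε / 2 := by rw [← hfin]; exact hbound
  linarith
end

section
/- Fix an integer m ≥ 1. If x is a sequence of positive reals belonging to C_∞^G(Δ_G^m) with x_1 = x_2 = ⋯ = x_m = 1, then the sequence k ↦ (1/k) · |Δ^{m-1} (log x)_k| is bounded. (In geometric notation: sup_k e^{k^{-1}} ⊙ |Δ_G^{m-1} x_k|_G < ∞.) -/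
open Finset

/-- The paper's difference is `Δ y_k = y_k − y_{k+1}`, the negative of Mathlib's `fwdDiff 1`. -/
lemma fdiff_eq_neg_one_pow_mul_fwdDiff_iter (m : ℕ) (y : ℕ → ℝ) (k : ℕ) :
    fdiff m y k = (-1) ^ m * (fwdDiff 1)^[m] y k := by
  rw [fwdDiff_iter_eq_sum_shift, fdiff, mul_sum]
  refine sum_congr rfl fun v hv => ?_
  obtain ⟨d, rfl⟩ := Nat.exists_eq_add_of_le (Nat.lt_succ_iff.mp (mem_range.mp hv))
  rw [Nat.add_sub_cancel_left, zsmul_eq_mul, smul_eq_mul, mul_one]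
  push_cast
  have hd : ((-1 : ℝ) ^ d) ^ 2 = 1 := by rw [← pow_mul, pow_mul', neg_one_sq, one_pow]
  linear_combination -(-1 : ℝ) ^ v * ((v + d).choose v : ℝ) * y (k + v) * hd

lemma fdiff_succ (j : ℕ) (y : ℕ → ℝ) (k : ℕ) :
    fdiff (j + 1) y k = fdiff j y k - fdiff j y (k + 1) := by
  simp only [fdiff_eq_neg_one_pow_mul_fwdDiff_iter, Function.iterate_succ_apply', fwdDiff]
  ring

lemma sum_Icc_fdiff_succ (j : ℕ) (y : ℕ → ℝ) (n : ℕ) :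
    ∑ k ∈ Icc 1 n, fdiff (j + 1) y k = fdiff j y 1 - fdiff j y (n + 1) := by
  induction n with
  | zero => simp
  | succ n ih => rw [sum_Icc_succ_top (by omega), ih, fdiff_succ]; ring

lemma fdiff_eq_zero_of_forall_eq_zero {j : ℕ} {y : ℕ → ℝ} {k : ℕ}
    (hy : ∀ i, k ≤ i → i ≤ k + j → y i = 0) : fdiff j y k = 0 :=
  sum_eq_zero fun v hv => by
    rw [hy _ le_self_add (by have := mem_range.mp hv; omega), mul_zero]

lemma natCast_mul_cesaro (m : ℕ) (x : ℕ → ℝ) (n : ℕ) :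
    n * cesaro m x n = ∑ k ∈ Icc 1 n, fdiff m (fun j => Real.log (x j)) k := by
  rcases n.eq_zero_or_pos with rfl | hn
  · simp
  · rw [cesaro, ← mul_assoc, mul_one_div_cancel (by positivity), one_mul]

/-- if `x ∈ υC_∞^G(Δ_G^m)` (i.e. `x ∈ C_∞^G(Δ_G^m)` with
`x_1 = ⋯ = x_m = 1`), then `sup_k e^{k^{-1}} ⊙ |Δ_G^{m-1} x_k|_G < ∞`, i.e.
the sequence `k ↦ (1/k)·|Δ^{m-1}(log x)_k|` is bounded. -/
theorem upsilonCinfG_fdiff_pred_bounded (m : ℕ) (hm : 1 ≤ m) (x : ℕ → ℝ)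
    (hx : memCinfG m x) (hone : ∀ i, 1 ≤ i → i ≤ m → x i = 1) :
    ∃ C : ℝ, ∀ k : ℕ,
      (1 / (k : ℝ)) * |fdiff (m - 1) (fun j => Real.log (x j)) k| ≤ C := by
  obtain ⟨-, C, hC⟩ := hx
  refine ⟨C, ?_⟩
  rintro (_ | n)
  · simpa using (abs_nonneg _).trans (hC 0)
  have hstart : fdiff (m - 1) (fun j => Real.log (x j)) 1 = 0 :=
    fdiff_eq_zero_of_forall_eq_zero fun i hi hi' => by simp [hone i hi (by omega)]
  have hend : |fdiff (m - 1) (fun j => Real.log (x j)) (n + 1)| = n * |cesaro m x n| := by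
    obtain ⟨j, rfl⟩ := Nat.exists_eq_add_of_le' hm
    rw [Nat.add_sub_cancel] at hstart ⊢
    rw [← abs_neg, ← zero_sub, ← hstart, ← sum_Icc_fdiff_succ, ← natCast_mul_cesaro, abs_mul,
      Nat.abs_cast]
  calc 1 / ((n + 1 : ℕ) : ℝ) * |fdiff (m - 1) (fun j => Real.log (x j)) (n + 1)|
      = n / (n + 1) * |cesaro m x n| := by rw [hend]; push_cast; ring
    _ ≤ 1 * C := by
      gcongr
      · exact (div_le_one (by positivity)).mpr (by linarith)
      · exact hC n
    _ = C := one_mul C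
end
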